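/- Let H be a real Hilbert space, E : H → ℝ Fréchet differentiable, and ξ : [0,∞) → H differentiable with ξ'(t) = −∇E(ξ(t)) for all t ≥ 0. Let γ∞ ∈ H, Z > 0, δ ∈ (0,1], θ ∈ [1/2,1), and suppose ‖∇E(η)‖ ≥ Z|E(η) − E(γ∞)|^θ for all η with ‖η − γ∞‖ < δ. Let 0 ≤ t₁ ≤ t₂ and assume that for all t ∈ [t₁,t₂] one has ‖ξ(t) − γ∞‖ < δ and E(ξ(t)) > E(γ∞). Then (1−θ) Z ∫_{t₁}^{t₂} ‖ξ'(r)‖ dr ≤ (E(ξ(t₁)) − E(γ∞))^{1−θ} − (E(ξ(t₂)) − E(γ∞))^{1−θ}. -/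

import Mathlib

/-!
Along the flow, `u(t) = E(ξ t) - E(γ∞)` decreases at rate `‖ξ'‖²`, and the Łojasiewicz
inequality says `Z u^θ ≤ ‖ξ'‖`. Hence `-(u^(1-θ))` has derivative
`(1-θ) u^(-θ) ‖ξ'‖² ≥ (1-θ) Z ‖ξ'‖`, and integrating this gives the estimate. Since the
derivative dominates the nonnegative integrand, it also makes `‖ξ'‖` integrable.
-/

open Set MeasureTheory

theorem aestronglyMeasurable_restrict_of_hasDerivAt {F : Type*} [NormedAddCommGroup F]
    [NormedSpace ℝ F] [CompleteSpace F] {f f' : ℝ → F} {s : Set ℝ} (hs : MeasurableSet s)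
    (hf : ∀ t ∈ s, HasDerivAt f (f' t) t) : AEStronglyMeasurable f' (volume.restrict s) :=
  (aestronglyMeasurable_deriv f _).congr <|
    (ae_restrict_mem hs).mono fun t ht => (hf t ht).deriv

theorem intervalIntegral.integral_le_sub_of_hasDerivAt_of_nonneg_of_le {g g' φ : ℝ → ℝ}
    {a b : ℝ} (hab : a ≤ b) (hg : ∀ t ∈ Icc a b, HasDerivAt g (g' t) t)
    (hφ : AEStronglyMeasurable φ (volume.restrict (Icc a b)))
    (hφ_nonneg : ∀ t ∈ Icc a b, 0 ≤ φ t) (hφg : ∀ t ∈ Icc a b, φ t ≤ g' t) :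
    ∫ t in a..b, φ t ≤ g b - g a := by
  have hcont : ContinuousOn g (Icc a b) := fun t ht => (hg t ht).continuousAt.continuousWithinAt
  have hg'_int : IntegrableOn g' (Icc a b) := by
    rw [integrableOn_Icc_iff_integrableOn_Ioc]
    exact integrableOn_deriv_of_nonneg hcont (fun t ht => hg t (Ioo_subset_Icc_self ht))
      fun t ht => (hφ_nonneg t (Ioo_subset_Icc_self ht)).trans (hφg t (Ioo_subset_Icc_self ht))
  have hφ_int : IntegrableOn φ (Icc a b) :=
    hg'_int.mono' hφ <| (ae_restrict_mem measurableSet_Icc).mono fun t ht => by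
      rw [Real.norm_of_nonneg (hφ_nonneg t ht)]
      exact hφg t ht
  exact integral_le_sub_of_hasDeriv_right_of_le hab hcont
    (fun t ht => (hg t (Ioo_subset_Icc_self ht)).hasDerivWithinAt) hφ_int
    fun t ht => hφg t (Ioo_subset_Icc_self ht)

theorem mul_integral_le_rpow_sub_rpow_of_lojasiewicz {u u' w : ℝ → ℝ} {a b Z θ : ℝ}
    (hab : a ≤ b) (hZ : 0 ≤ Z) (hθ : θ ≤ 1) (hu : ∀ t ∈ Icc a b, HasDerivAt u (u' t) t)
    (hu_pos : ∀ t ∈ Icc a b, 0 < u t)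
    (hw : AEStronglyMeasurable w (volume.restrict (Icc a b))) (hw_nonneg : ∀ t ∈ Icc a b, 0 ≤ w t)
    (hLS : ∀ t ∈ Icc a b, Z * u t ^ θ * w t ≤ -u' t) :
    (1 - θ) * Z * ∫ t in a..b, w t ≤ u a ^ (1 - θ) - u b ^ (1 - θ) := by
  have hderiv : ∀ t ∈ Icc a b,
      HasDerivAt (fun s => -u s ^ (1 - θ)) ((1 - θ) * u t ^ (-θ) * -u' t) t := by
    intro t ht
    refine ((hu t ht).rpow_const (p := 1 - θ) (Or.inl (hu_pos t ht).ne')).neg.congr_deriv ?_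
    rw [sub_sub_cancel_left]
    ring
  have hle : ∀ t ∈ Icc a b, (1 - θ) * Z * w t ≤ (1 - θ) * u t ^ (-θ) * -u' t := by
    intro t ht
    have hpow : u t ^ (-θ) * u t ^ θ = 1 := by
      rw [← Real.rpow_add (hu_pos t ht), neg_add_cancel, Real.rpow_zero]
    calc (1 - θ) * Z * w t = (1 - θ) * u t ^ (-θ) * (Z * u t ^ θ * w t) := by
          linear_combination (1 - θ) * Z * w t * (-hpow)
      _ ≤ (1 - θ) * u t ^ (-θ) * -u' t := by
          gcongr
          · exact mul_nonneg (by linarith) (Real.rpow_nonneg (hu_pos t ht).le _)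
          · exact hLS t ht
  rw [← intervalIntegral.integral_const_mul]
  have := intervalIntegral.integral_le_sub_of_hasDerivAt_of_nonneg_of_le hab hderiv
    (hw.const_mul _) (fun t ht => mul_nonneg (mul_nonneg (by linarith) hZ) (hw_nonneg t ht)) hle
  linarith

theorem hasDerivAt_comp_of_hasDerivAt_neg_gradient {H : Type*} [NormedAddCommGroup H]
    [InnerProductSpace ℝ H] [CompleteSpace H] {E : H → ℝ} {ξ : ℝ → H} {t : ℝ}
    (hE : DifferentiableAt ℝ E (ξ t)) (hξ : HasDerivAt ξ (-gradient E (ξ t)) t) :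
    HasDerivAt (fun s => E (ξ s)) (-‖gradient E (ξ t)‖ ^ 2) t := by
  have := hE.hasGradientAt.hasFDerivAt.comp_hasDerivAt t hξ
  rwa [InnerProductSpace.toDual_apply_apply, inner_neg_right, real_inner_self_eq_norm_sq] at this

theorem stmt12_general {H : Type*} [NormedAddCommGroup H] [InnerProductSpace ℝ H]
    [CompleteSpace H]
    (E : H → ℝ) (hE : Differentiable ℝ E)
    (ξ ξ' : ℝ → H) (hξ : ∀ t : ℝ, 0 ≤ t → HasDerivAt ξ (ξ' t) t)
    (hflow : ∀ t : ℝ, 0 ≤ t → ξ' t = -(gradient E (ξ t)))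
    (γlim : H) (Z δ θ : ℝ) (hZ : 0 < Z)
    (hθ : θ ∈ Set.Ico (1/2 : ℝ) 1)
    (hLS : ∀ η : H, ‖η - γlim‖ < δ → Z * |E η - E γlim| ^ θ ≤ ‖gradient E η‖)
    (t₁ t₂ : ℝ) (ht₁ : 0 ≤ t₁) (ht₁₂ : t₁ ≤ t₂)
    (hstay : ∀ t ∈ Set.Icc t₁ t₂, ‖ξ t - γlim‖ < δ ∧ E γlim < E (ξ t)) :
    (1 - θ) * Z * ∫ r in t₁..t₂, ‖ξ' r‖
      ≤ (E (ξ t₁) - E γlim) ^ (1 - θ) - (E (ξ t₂) - E γlim) ^ (1 - θ) := by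
  have hξ_Icc : ∀ t ∈ Icc t₁ t₂, HasDerivAt ξ (ξ' t) t := fun t ht => hξ t (ht₁.trans ht.1)
  have hξ'_eq : ∀ t ∈ Icc t₁ t₂, ξ' t = -gradient E (ξ t) :=
    fun t ht => hflow t (ht₁.trans ht.1)
  have henergy : ∀ t ∈ Icc t₁ t₂,
      HasDerivAt (fun s => E (ξ s) - E γlim) (-‖ξ' t‖ ^ 2) t := fun t ht => by
    rw [hξ'_eq t ht, norm_neg]
    exact (hasDerivAt_comp_of_hasDerivAt_neg_gradient (hE _)
      (hξ'_eq t ht ▸ hξ_Icc t ht)).sub_const _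
  refine mul_integral_le_rpow_sub_rpow_of_lojasiewicz ht₁₂ hZ.le hθ.2.le henergy
    (fun t ht => sub_pos.2 (hstay t ht).2)
    (aestronglyMeasurable_restrict_of_hasDerivAt measurableSet_Icc hξ_Icc).norm
    (fun _ _ => norm_nonneg _) fun t ht => ?_
  have hLS_t := hLS (ξ t) (hstay t ht).1
  rw [abs_of_pos (sub_pos.2 (hstay t ht).2), ← norm_neg, ← hξ'_eq t ht] at hLS_t
  rw [neg_neg, sq]
  exact mul_le_mul_of_nonneg_right hLS_t (norm_nonneg _)

/-- Integrated Łojasiewicz–Simon length estimate along the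
gradient flow: as long as the trajectory stays in the Łojasiewicz ball with
`E(ξ(t)) > E(γ∞)`, one has
`(1−θ) Z ∫_{t₁}^{t₂} ‖ξ'(r)‖ dr ≤ (E(ξ(t₁))−E(γ∞))^{1−θ} − (E(ξ(t₂))−E(γ∞))^{1−θ}`. -/
theorem stmt12 {H : Type*} [NormedAddCommGroup H] [InnerProductSpace ℝ H]
    [CompleteSpace H]
    (E : H → ℝ) (hE : Differentiable ℝ E)
    (ξ ξ' : ℝ → H) (hξ : ∀ t : ℝ, 0 ≤ t → HasDerivAt ξ (ξ' t) t)
    (hflow : ∀ t : ℝ, 0 ≤ t → ξ' t = -(gradient E (ξ t)))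
    (γlim : H) (Z δ θ : ℝ) (hZ : 0 < Z) (hδ : δ ∈ Set.Ioc (0:ℝ) 1)
    (hθ : θ ∈ Set.Ico (1/2 : ℝ) 1)
    (hLS : ∀ η : H, ‖η - γlim‖ < δ → Z * |E η - E γlim| ^ θ ≤ ‖gradient E η‖)
    (t₁ t₂ : ℝ) (ht₁ : 0 ≤ t₁) (ht₁₂ : t₁ ≤ t₂)
    (hstay : ∀ t ∈ Set.Icc t₁ t₂, ‖ξ t - γlim‖ < δ ∧ E γlim < E (ξ t)) :
    (1 - θ) * Z * ∫ r in t₁..t₂, ‖ξ' r‖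
      ≤ (E (ξ t₁) - E γlim) ^ (1 - θ) - (E (ξ t₂) - E γlim) ^ (1 - θ) :=
  stmt12_general E hE ξ ξ' hξ hflow γlim Z δ θ hZ hθ hLS t₁ t₂ ht₁ ht₁₂ hstay
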